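/- arXiv:math-ph/9904012 — 3 statements merged into one kernel-verified Lean document; each statement's English description precedes it below -/
import Mathlib

section
/- If v satisfies the vorticity form of the Navier–Stokes equation ∂w/∂t − ∇×(v×w) = ν∇²w with w = ∇×v and ∇·v = 0, then the 2-form Ω_ν = −(∇φ + v×w − ν∇×w)·dx ∧ dt + w·(dx∧dx) on I×M is closed. -/
noncomputable section

/-- Points of `I × M ⊆ ℝ × ℝ³`, as `ℝ⁴` with coordinates `0,1,2` spatial and `3` time. -/
abbrev E4 := Fin 4 → ℝ

/-- Partial derivative `∂ₐ f` on `ℝ⁴` (`a = 3` is the time derivative). -/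
def pd4 (a : Fin 4) (f : E4 → ℝ) (x : E4) : ℝ := fderiv ℝ f x (Pi.single a 1)

/-- Cross product on `ℝ³`. -/
def cross3 (a b : Fin 3 → ℝ) : Fin 3 → ℝ :=
  ![a 1 * b 2 - a 2 * b 1, a 2 * b 0 - a 0 * b 2, a 0 * b 1 - a 1 * b 0]

/-- Dot product on `ℝ³`. -/
def dot3 (a b : Fin 3 → ℝ) : ℝ := ∑ i, a i * b i

/-- Spatial curl `∇ × v` of a time-dependent vector field. -/
def curl4 (v : E4 → Fin 3 → ℝ) (x : E4) : Fin 3 → ℝ :=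
  ![pd4 1 (fun y => v y 2) x - pd4 2 (fun y => v y 1) x,
    pd4 2 (fun y => v y 0) x - pd4 0 (fun y => v y 2) x,
    pd4 0 (fun y => v y 1) x - pd4 1 (fun y => v y 0) x]

/-- Spatial divergence `∇ · v`. -/
def div4 (v : E4 → Fin 3 → ℝ) (x : E4) : ℝ :=
  pd4 0 (fun y => v y 0) x + pd4 1 (fun y => v y 1) x + pd4 2 (fun y => v y 2) x

/-- Spatial gradient `∇ f`. -/
def grad4 (f : E4 → ℝ) (x : E4) : Fin 3 → ℝ := ![pd4 0 f x, pd4 1 f x, pd4 2 f x]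

/-- Componentwise spatial Laplacian `∇² v`. -/
def lap4 (v : E4 → Fin 3 → ℝ) (x : E4) (i : Fin 3) : ℝ :=
  pd4 0 (fun y => pd4 0 (fun z => v z i) y) x
    + pd4 1 (fun y => pd4 1 (fun z => v z i) y) x
    + pd4 2 (fun y => pd4 2 (fun z => v z i) y) x

/-- The spatial 1-form `∇φ + v×w − ν∇×w` (with `w = ∇×v`). -/
def aNu (ν : ℝ) (φ : E4 → ℝ) (v : E4 → Fin 3 → ℝ) (x : E4) (i : Fin 3) : ℝ :=
  grad4 φ x i + cross3 (v x) (curl4 v x) i - ν * curl4 (fun y => curl4 v y) x i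

/-- Coefficient matrix of the 2-form
`Ω_ν = −(∇φ + v×w − ν∇×w)·dx∧dt + w·(dx∧dx)` on `I × M`, with `w = ∇×v`:
`(Ω_ν)(e_a, e_b)` for the coordinate frame `(e₀,e₁,e₂,e₃) = (∂ₓ,∂_y,∂_z,∂_t)`. -/
def OmegaNu (ν : ℝ) (φ : E4 → ℝ) (v : E4 → Fin 3 → ℝ) (x : E4) : Fin 4 → Fin 4 → ℝ :=
  ![![0, curl4 v x 2, -(curl4 v x 1), -(aNu ν φ v x 0)],
    ![-(curl4 v x 2), 0, curl4 v x 0, -(aNu ν φ v x 1)],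
    ![curl4 v x 1, -(curl4 v x 0), 0, -(aNu ν φ v x 2)],
    ![aNu ν φ v x 0, aNu ν φ v x 1, aNu ν φ v x 2, 0]]

/-- Potential vorticity `q = w·∇φ`, `w = ∇×v`. -/
def pvort (φ : E4 → ℝ) (v : E4 → Fin 3 → ℝ) (x : E4) : ℝ :=
  dot3 (curl4 v x) (grad4 φ x)

/-- Vortical helicity `𝓗_w = (1/2) w·(∇×w)`, `w = ∇×v`. -/
def Hw (v : E4 → Fin 3 → ℝ) (x : E4) : ℝ :=
  (1 / 2) * dot3 (curl4 v x) (curl4 (fun y => curl4 v y) x)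

/-- Helicity density `𝓗 = (1/2) v·(∇×v)`. -/
def Hel (v : E4 → Fin 3 → ℝ) (x : E4) : ℝ := (1 / 2) * dot3 (v x) (curl4 v x)

/-- Coefficients of the canonical 1-form `θ = −(φ + p + |v|²/2) dt + v·dx`. -/
def thetaF (φ p : E4 → ℝ) (v : E4 → Fin 3 → ℝ) (x : E4) : Fin 4 → ℝ :=
  ![v x 0, v x 1, v x 2, -(φ x + p x + (1 / 2) * dot3 (v x) (v x))]

/-- The suspended velocity field `∂_t + v` on `I × M`. -/
def susp (v : E4 → Fin 3 → ℝ) (x : E4) : Fin 4 → ℝ := ![v x 0, v x 1, v x 2, 1]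

lemma pd4_smooth {f : E4 → ℝ} (hf : ContDiff ℝ (⊤:ℕ∞) f) (a : Fin 4) :
    ContDiff ℝ (⊤:ℕ∞) (pd4 a f) := by
  have hd : ContDiff ℝ (⊤:ℕ∞) (fderiv ℝ f) := hf.fderiv_right (by exact_mod_cast le_top)
  exact hd.clm_apply contDiff_const

lemma dAt {f : E4 → ℝ} (hf : ContDiff ℝ (⊤:ℕ∞) f) (x : E4) : DifferentiableAt ℝ f x :=
  (hf.differentiable (by simp)).differentiableAt

lemma pd4_add {f g : E4 → ℝ} {x : E4} (hf : DifferentiableAt ℝ f x)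
    (hg : DifferentiableAt ℝ g x) (a : Fin 4) :
    pd4 a (fun y => f y + g y) x = pd4 a f x + pd4 a g x := by
  simp [pd4, fderiv_fun_add hf hg]

lemma pd4_sub {f g : E4 → ℝ} {x : E4} (hf : DifferentiableAt ℝ f x)
    (hg : DifferentiableAt ℝ g x) (a : Fin 4) :
    pd4 a (fun y => f y - g y) x = pd4 a f x - pd4 a g x := by
  simp [pd4, fderiv_fun_sub hf hg]

lemma pd4_neg {f : E4 → ℝ} {x : E4} (a : Fin 4) :
    pd4 a (fun y => -(f y)) x = -(pd4 a f x) := by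
  simp [pd4, fderiv_neg]

lemma pd4_const (c : ℝ) (a : Fin 4) (x : E4) : pd4 a (fun _ => c) x = 0 := by
  simp [pd4]

lemma pd4_const_mul {f : E4 → ℝ} {x : E4} (hf : DifferentiableAt ℝ f x) (c : ℝ) (a : Fin 4) :
    pd4 a (fun y => c * f y) x = c * pd4 a f x := by
  simp [pd4, fderiv_const_mul hf]

lemma pd4_mul {f g : E4 → ℝ} {x : E4} (hf : DifferentiableAt ℝ f x)
    (hg : DifferentiableAt ℝ g x) (a : Fin 4) :
    pd4 a (fun y => f y * g y) x = f x * pd4 a g x + g x * pd4 a f x := by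
  simp [pd4, fderiv_fun_mul hf hg]

lemma pd4_comm {f : E4 → ℝ} (hf : ContDiff ℝ (⊤:ℕ∞) f) (a b : Fin 4) (x : E4) :
    pd4 a (pd4 b f) x = pd4 b (pd4 a f) x := by
  have hsymm : IsSymmSndFDerivAt ℝ f x :=
    hf.contDiffAt.isSymmSndFDerivAt (by exact le_trans (by norm_num) (WithTop.coe_le_coe.2 (le_top : (2:ℕ∞) ≤ ⊤)))
  have hd : ContDiff ℝ (⊤:ℕ∞) (fderiv ℝ f) := hf.fderiv_right (by exact_mod_cast le_top)
  have key : ∀ c d : Fin 4, pd4 c (pd4 d f) x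
      = fderiv ℝ (fderiv ℝ f) x (Pi.single c 1) (Pi.single d 1) := by
    intro c d
    have h1 : pd4 d f = fun y => fderiv ℝ f y (Pi.single d 1) := rfl
    rw [pd4, h1, fderiv_clm_apply ((hd.differentiable (by simp)) x)
      (differentiableAt_const _)]
    simp
  rw [key, key, hsymm (Pi.single a 1) (Pi.single b 1)]
variable {v : E4 → Fin 3 → ℝ} {φ : E4 → ℝ} {ν : ℝ}

lemma sV (hv : ContDiff ℝ (⊤:ℕ∞) v) (i : Fin 3) : ContDiff ℝ (⊤:ℕ∞) (fun y => v y i) :=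
  contDiff_pi.1 hv i


lemma sCurl {u : E4 → Fin 3 → ℝ} (hu : ∀ j, ContDiff ℝ (⊤:ℕ∞) (fun y => u y j)) (i : Fin 3) :
    ContDiff ℝ (⊤:ℕ∞) (fun y => curl4 u y i) := by
  fin_cases i
  · show ContDiff ℝ (⊤:ℕ∞) (fun y => pd4 1 (fun z => u z 2) y - pd4 2 (fun z => u z 1) y)
    exact (pd4_smooth (hu 2) 1).sub (pd4_smooth (hu 1) 2)
  · show ContDiff ℝ (⊤:ℕ∞) (fun y => pd4 2 (fun z => u z 0) y - pd4 0 (fun z => u z 2) y)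
    exact (pd4_smooth (hu 0) 2).sub (pd4_smooth (hu 2) 0)
  · show ContDiff ℝ (⊤:ℕ∞) (fun y => pd4 0 (fun z => u z 1) y - pd4 1 (fun z => u z 0) y)
    exact (pd4_smooth (hu 1) 0).sub (pd4_smooth (hu 0) 1)

lemma sW (hv : ContDiff ℝ (⊤:ℕ∞) v) (i : Fin 3) :
    ContDiff ℝ (⊤:ℕ∞) (fun y => curl4 v y i) := sCurl (contDiff_pi.1 hv) i

lemma sWW (hv : ContDiff ℝ (⊤:ℕ∞) v) (i : Fin 3) :
    ContDiff ℝ (⊤:ℕ∞) (fun y => curl4 (fun z => curl4 v z) y i) := sCurl (sW hv) i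

lemma sC (hv : ContDiff ℝ (⊤:ℕ∞) v) (i : Fin 3) :
    ContDiff ℝ (⊤:ℕ∞) (fun y => cross3 (v y) (curl4 v y) i) := by
  fin_cases i
  · show ContDiff ℝ (⊤:ℕ∞)
      (fun y => v y 1 * curl4 v y 2 - v y 2 * curl4 v y 1)
    exact ((sV hv 1).mul (sW hv 2)).sub ((sV hv 2).mul (sW hv 1))
  · show ContDiff ℝ (⊤:ℕ∞)
      (fun y => v y 2 * curl4 v y 0 - v y 0 * curl4 v y 2)
    exact ((sV hv 2).mul (sW hv 0)).sub ((sV hv 0).mul (sW hv 2))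
  · show ContDiff ℝ (⊤:ℕ∞)
      (fun y => v y 0 * curl4 v y 1 - v y 1 * curl4 v y 0)
    exact ((sV hv 0).mul (sW hv 1)).sub ((sV hv 1).mul (sW hv 0))

lemma sA (hv : ContDiff ℝ (⊤:ℕ∞) v) (hφ : ContDiff ℝ (⊤:ℕ∞) φ) (i : Fin 3) :
    ContDiff ℝ (⊤:ℕ∞) (fun y => aNu ν φ v y i) := by
  have h1 : ContDiff ℝ (⊤:ℕ∞) (fun y => grad4 φ y i) := by
    fin_cases i
    · show ContDiff ℝ (⊤:ℕ∞) (pd4 0 φ); exact pd4_smooth hφ 0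
    · show ContDiff ℝ (⊤:ℕ∞) (pd4 1 φ); exact pd4_smooth hφ 1
    · show ContDiff ℝ (⊤:ℕ∞) (pd4 2 φ); exact pd4_smooth hφ 2
  exact (h1.add (sC hv i)).sub (contDiff_const.mul (sWW hv i))
lemma divW (hv : ContDiff ℝ (⊤:ℕ∞) v) (y : E4) :
    pd4 0 (fun z => curl4 v z 0) y + pd4 1 (fun z => curl4 v z 1) y
      + pd4 2 (fun z => curl4 v z 2) y = 0 := by
  have e0 : (fun z => curl4 v z 0)
      = fun z => pd4 1 (fun u => v u 2) z - pd4 2 (fun u => v u 1) z := rfl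
  have e1 : (fun z => curl4 v z 1)
      = fun z => pd4 2 (fun u => v u 0) z - pd4 0 (fun u => v u 2) z := rfl
  have e2 : (fun z => curl4 v z 2)
      = fun z => pd4 0 (fun u => v u 1) z - pd4 1 (fun u => v u 0) z := rfl
  have d : ∀ (i : Fin 3) (a : Fin 4) (w : E4),
      DifferentiableAt ℝ (pd4 a (fun u => v u i)) w :=
    fun i a w => dAt (pd4_smooth (sV hv i) a) w
  rw [e0, e1, e2, pd4_sub (d 2 1 y) (d 1 2 y), pd4_sub (d 0 2 y) (d 2 0 y),
    pd4_sub (d 1 0 y) (d 0 1 y)]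
  have c1 := pd4_comm (sV hv 2) 0 1 y
  have c2 := pd4_comm (sV hv 1) 0 2 y
  have c3 := pd4_comm (sV hv 0) 1 2 y
  linarith
section K
variable (hv : ContDiff ℝ (⊤:ℕ∞) v) (hφ : ContDiff ℝ (⊤:ℕ∞) φ)
  (hvort : ∀ (x : E4) (i : Fin 3),
      pd4 3 (fun y => curl4 v y i) x
        - curl4 (fun y => cross3 (v y) (curl4 v y)) x i
        = ν * lap4 (fun y => curl4 v y) x i)

include hv hφ hvort in
lemma K2 (x : E4) :
    pd4 3 (fun y => curl4 v y 2) x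
      = pd4 0 (fun y => aNu ν φ v y 1) x - pd4 1 (fun y => aNu ν φ v y 0) x := by
  -- abbreviations as equalities (all rfl)
  have hA1 : (fun y => aNu ν φ v y 1)
      = fun y => pd4 1 φ y + cross3 (v y) (curl4 v y) 1
          - ν * curl4 (fun z => curl4 v z) y 1 := rfl
  have hA0 : (fun y => aNu ν φ v y 0)
      = fun y => pd4 0 φ y + cross3 (v y) (curl4 v y) 0
          - ν * curl4 (fun z => curl4 v z) y 0 := rfl
  rw [hA1, hA0,
    pd4_sub (dAt ((pd4_smooth hφ 1).add (sC hv 1)) x) (dAt (contDiff_const.mul (sWW hv 1)) x),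
    pd4_add (dAt (pd4_smooth hφ 1) x) (dAt (sC hv 1) x),
    pd4_const_mul (dAt (sWW hv 1) x),
    pd4_sub (dAt ((pd4_smooth hφ 0).add (sC hv 0)) x) (dAt (contDiff_const.mul (sWW hv 0)) x),
    pd4_add (dAt (pd4_smooth hφ 0) x) (dAt (sC hv 0) x),
    pd4_const_mul (dAt (sWW hv 0) x)]
  have hφc := pd4_comm hφ 0 1 x
  -- vorticity equation at component 2
  have hveq := hvort x 2
  have hC : curl4 (fun y => cross3 (v y) (curl4 v y)) x 2
      = pd4 0 (fun y => cross3 (v y) (curl4 v y) 1) x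
        - pd4 1 (fun y => cross3 (v y) (curl4 v y) 0) x := rfl
  rw [hC] at hveq
  -- expand the curl-curl terms
  have hWW1 : (fun y => curl4 (fun z => curl4 v z) y 1)
      = fun y => pd4 2 (fun z => curl4 v z 0) y - pd4 0 (fun z => curl4 v z 2) y := rfl
  have hWW0 : (fun y => curl4 (fun z => curl4 v z) y 0)
      = fun y => pd4 1 (fun z => curl4 v z 2) y - pd4 2 (fun z => curl4 v z 1) y := rfl
  have d : ∀ (i : Fin 3) (a : Fin 4) (w : E4),
      DifferentiableAt ℝ (pd4 a (fun z => curl4 v z i)) w :=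
    fun i a w => dAt (pd4_smooth (sW hv i) a) w
  rw [hWW1, pd4_sub (d 0 2 x) (d 2 0 x), hWW0, pd4_sub (d 2 1 x) (d 1 2 x)]
  -- laplacian expansion (definitional)
  have hlap : lap4 (fun y => curl4 v y) x 2
      = pd4 0 (pd4 0 (fun z => curl4 v z 2)) x + pd4 1 (pd4 1 (fun z => curl4 v z 2)) x
        + pd4 2 (pd4 2 (fun z => curl4 v z 2)) x := rfl
  rw [hlap] at hveq
  -- divergence of curl is identically zero: differentiate in direction 2
  have hzero : (fun y => pd4 0 (fun z => curl4 v z 0) y + pd4 1 (fun z => curl4 v z 1) y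
      + pd4 2 (fun z => curl4 v z 2) y) = fun _ => (0:ℝ) := funext fun y => divW hv y
  have hdz : pd4 2 (fun y => pd4 0 (fun z => curl4 v z 0) y + pd4 1 (fun z => curl4 v z 1) y
      + pd4 2 (fun z => curl4 v z 2) y) x = 0 := by rw [hzero]; exact pd4_const 0 2 x
  rw [pd4_add (DifferentiableAt.fun_add (d 0 0 x) (d 1 1 x)) (d 2 2 x),
    pd4_add (d 0 0 x) (d 1 1 x)] at hdz
  have c1 := pd4_comm (sW hv 0) 2 0 x
  have c2 := pd4_comm (sW hv 1) 2 1 x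
  linear_combination hveq - hφc + ν*hdz - ν*c1 - ν*c2

include hv hφ hvort in
lemma K0 (x : E4) :
    pd4 3 (fun y => curl4 v y 0) x
      = pd4 1 (fun y => aNu ν φ v y 2) x - pd4 2 (fun y => aNu ν φ v y 1) x := by
  have hA2 : (fun y => aNu ν φ v y 2)
      = fun y => pd4 2 φ y + cross3 (v y) (curl4 v y) 2
          - ν * curl4 (fun z => curl4 v z) y 2 := rfl
  have hA1 : (fun y => aNu ν φ v y 1)
      = fun y => pd4 1 φ y + cross3 (v y) (curl4 v y) 1
          - ν * curl4 (fun z => curl4 v z) y 1 := rfl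
  rw [hA2, hA1,
    pd4_sub (dAt ((pd4_smooth hφ 2).add (sC hv 2)) x) (dAt (contDiff_const.mul (sWW hv 2)) x),
    pd4_add (dAt (pd4_smooth hφ 2) x) (dAt (sC hv 2) x),
    pd4_const_mul (dAt (sWW hv 2) x),
    pd4_sub (dAt ((pd4_smooth hφ 1).add (sC hv 1)) x) (dAt (contDiff_const.mul (sWW hv 1)) x),
    pd4_add (dAt (pd4_smooth hφ 1) x) (dAt (sC hv 1) x),
    pd4_const_mul (dAt (sWW hv 1) x)]
  have hφc := pd4_comm hφ 1 2 x
  have hveq := hvort x 0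
  have hC : curl4 (fun y => cross3 (v y) (curl4 v y)) x 0
      = pd4 1 (fun y => cross3 (v y) (curl4 v y) 2) x
        - pd4 2 (fun y => cross3 (v y) (curl4 v y) 1) x := rfl
  rw [hC] at hveq
  have hWW2 : (fun y => curl4 (fun z => curl4 v z) y 2)
      = fun y => pd4 0 (fun z => curl4 v z 1) y - pd4 1 (fun z => curl4 v z 0) y := rfl
  have hWW1 : (fun y => curl4 (fun z => curl4 v z) y 1)
      = fun y => pd4 2 (fun z => curl4 v z 0) y - pd4 0 (fun z => curl4 v z 2) y := rfl
  have d : ∀ (i : Fin 3) (a : Fin 4) (w : E4),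
      DifferentiableAt ℝ (pd4 a (fun z => curl4 v z i)) w :=
    fun i a w => dAt (pd4_smooth (sW hv i) a) w
  rw [hWW2, pd4_sub (d 1 0 x) (d 0 1 x), hWW1, pd4_sub (d 0 2 x) (d 2 0 x)]
  have hlap : lap4 (fun y => curl4 v y) x 0
      = pd4 0 (pd4 0 (fun z => curl4 v z 0)) x + pd4 1 (pd4 1 (fun z => curl4 v z 0)) x
        + pd4 2 (pd4 2 (fun z => curl4 v z 0)) x := rfl
  rw [hlap] at hveq
  have hzero : (fun y => pd4 0 (fun z => curl4 v z 0) y + pd4 1 (fun z => curl4 v z 1) y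
      + pd4 2 (fun z => curl4 v z 2) y) = fun _ => (0:ℝ) := funext fun y => divW hv y
  have hdz : pd4 0 (fun y => pd4 0 (fun z => curl4 v z 0) y + pd4 1 (fun z => curl4 v z 1) y
      + pd4 2 (fun z => curl4 v z 2) y) x = 0 := by rw [hzero]; exact pd4_const 0 0 x
  rw [pd4_add (DifferentiableAt.fun_add (d 0 0 x) (d 1 1 x)) (d 2 2 x),
    pd4_add (d 0 0 x) (d 1 1 x)] at hdz
  have c1 := pd4_comm (sW hv 1) 0 1 x
  have c2 := pd4_comm (sW hv 2) 0 2 x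
  linear_combination hveq - hφc + ν*hdz - ν*c1 - ν*c2

include hv hφ hvort in
lemma K1 (x : E4) :
    pd4 3 (fun y => curl4 v y 1) x
      = pd4 2 (fun y => aNu ν φ v y 0) x - pd4 0 (fun y => aNu ν φ v y 2) x := by
  have hA0 : (fun y => aNu ν φ v y 0)
      = fun y => pd4 0 φ y + cross3 (v y) (curl4 v y) 0
          - ν * curl4 (fun z => curl4 v z) y 0 := rfl
  have hA2 : (fun y => aNu ν φ v y 2)
      = fun y => pd4 2 φ y + cross3 (v y) (curl4 v y) 2
          - ν * curl4 (fun z => curl4 v z) y 2 := rfl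
  rw [hA0, hA2,
    pd4_sub (dAt ((pd4_smooth hφ 0).add (sC hv 0)) x) (dAt (contDiff_const.mul (sWW hv 0)) x),
    pd4_add (dAt (pd4_smooth hφ 0) x) (dAt (sC hv 0) x),
    pd4_const_mul (dAt (sWW hv 0) x),
    pd4_sub (dAt ((pd4_smooth hφ 2).add (sC hv 2)) x) (dAt (contDiff_const.mul (sWW hv 2)) x),
    pd4_add (dAt (pd4_smooth hφ 2) x) (dAt (sC hv 2) x),
    pd4_const_mul (dAt (sWW hv 2) x)]
  have hφc := pd4_comm hφ 2 0 x
  have hveq := hvort x 1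
  have hC : curl4 (fun y => cross3 (v y) (curl4 v y)) x 1
      = pd4 2 (fun y => cross3 (v y) (curl4 v y) 0) x
        - pd4 0 (fun y => cross3 (v y) (curl4 v y) 2) x := rfl
  rw [hC] at hveq
  have hWW0 : (fun y => curl4 (fun z => curl4 v z) y 0)
      = fun y => pd4 1 (fun z => curl4 v z 2) y - pd4 2 (fun z => curl4 v z 1) y := rfl
  have hWW2 : (fun y => curl4 (fun z => curl4 v z) y 2)
      = fun y => pd4 0 (fun z => curl4 v z 1) y - pd4 1 (fun z => curl4 v z 0) y := rfl
  have d : ∀ (i : Fin 3) (a : Fin 4) (w : E4),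
      DifferentiableAt ℝ (pd4 a (fun z => curl4 v z i)) w :=
    fun i a w => dAt (pd4_smooth (sW hv i) a) w
  rw [hWW0, pd4_sub (d 2 1 x) (d 1 2 x), hWW2, pd4_sub (d 1 0 x) (d 0 1 x)]
  have hlap : lap4 (fun y => curl4 v y) x 1
      = pd4 0 (pd4 0 (fun z => curl4 v z 1)) x + pd4 1 (pd4 1 (fun z => curl4 v z 1)) x
        + pd4 2 (pd4 2 (fun z => curl4 v z 1)) x := rfl
  rw [hlap] at hveq
  have hzero : (fun y => pd4 0 (fun z => curl4 v z 0) y + pd4 1 (fun z => curl4 v z 1) y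
      + pd4 2 (fun z => curl4 v z 2) y) = fun _ => (0:ℝ) := funext fun y => divW hv y
  have hdz : pd4 1 (fun y => pd4 0 (fun z => curl4 v z 0) y + pd4 1 (fun z => curl4 v z 1) y
      + pd4 2 (fun z => curl4 v z 2) y) x = 0 := by rw [hzero]; exact pd4_const 0 1 x
  rw [pd4_add (DifferentiableAt.fun_add (d 0 0 x) (d 1 1 x)) (d 2 2 x),
    pd4_add (d 0 0 x) (d 1 1 x)] at hdz
  have c1 := pd4_comm (sW hv 0) 1 0 x
  have c2 := pd4_comm (sW hv 2) 1 2 x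
  linear_combination hveq - hφc + ν*hdz - ν*c1 - ν*c2
end K

lemma fm0 : (⟨0, by omega⟩ : Fin 4) = 0 := rfl
lemma fm1 : (⟨1, by omega⟩ : Fin 4) = 1 := rfl
lemma fm2 : (⟨2, by omega⟩ : Fin 4) = 2 := rfl
lemma fm3 : (⟨3, by omega⟩ : Fin 4) = 3 := rfl

/-- if `v` is smooth, divergence free, and `w = ∇×v` satisfies the
vorticity form `∂w/∂t − ∇×(v×w) = ν∇²w` of the Navier–Stokes equation, then the
2-form `Ω_ν = −(∇φ + v×w − ν∇×w)·dx∧dt + w·(dx∧dx)` on `I×M` is closed: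
all coefficients `∂ₐ(Ω_ν)_bc + ∂_b(Ω_ν)_ca + ∂_c(Ω_ν)_ab` of `dΩ_ν` vanish. -/
theorem statement_2 (ν : ℝ) (hν : 0 ≤ ν) (φ : E4 → ℝ) (v : E4 → Fin 3 → ℝ)
    (hv : ContDiff ℝ (⊤ : ℕ∞) v) (hφ : ContDiff ℝ (⊤ : ℕ∞) φ)
    (hdiv : ∀ x, div4 v x = 0)
    (hvort : ∀ (x : E4) (i : Fin 3),
      pd4 3 (fun y => curl4 v y i) x
        - curl4 (fun y => cross3 (v y) (curl4 v y)) x i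
        = ν * lap4 (fun y => curl4 v y) x i) :
    ∀ (x : E4) (a b c : Fin 4),
      pd4 a (fun y => OmegaNu ν φ v y b c) x
        + pd4 b (fun y => OmegaNu ν φ v y c a) x
        + pd4 c (fun y => OmegaNu ν φ v y a b) x = 0 := by
  have hv' : ContDiff ℝ (⊤:ℕ∞) v := hv.of_le (by simp)
  have hφ' : ContDiff ℝ (⊤:ℕ∞) φ := hφ.of_le (by simp)
  intro x a b c
  fin_cases a <;> fin_cases b <;> fin_cases c <;>
  · simp only [fm0, fm1, fm2, fm3, OmegaNu, Matrix.cons_val_zero, Matrix.cons_val_one, Matrix.head_cons,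
      Matrix.cons_val_two, Matrix.tail_cons, Matrix.cons_val_three, Matrix.head_fin_const,
      Fin.isValue, pd4_neg, pd4_const]
    linarith [divW hv' x, K0 hv' hφ' hvort x, K1 hv' hφ' hvort x, K2 hv' hφ' hvort x]
end
end

section
/- For the 2-form Ω_ν = −(∇φ + v×w − ν∇×w)·dx∧dt + w·(dx∧dx) on a 4-dimensional domain I×M, one has Ω_ν ∧ Ω_ν = −2(q − 2ν𝓗_w) dx∧dy∧dz∧dt, where q = w·∇φ and 𝓗_w = (1/2) w·(∇×w). Consequently Ω_ν is non-degenerate (symplectic, given closedness) at points where q − 2ν𝓗_w ≠ 0. -/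
noncomputable section

/-- Auxiliary linear algebra lemma: the antisymmetric matrix with spatial block `w` and
time column `a` is injective when `a·w ≠ 0`. -/
lemma omega_key (w0 w1 w2 a0 a1 a2 u0 u1 u2 u3 : ℝ)
    (hc : a0 * w0 + a1 * w1 + a2 * w2 ≠ 0)
    (h0 : -(u1 * w2) + u2 * w1 + u3 * a0 = 0)
    (h1 : u0 * w2 - u2 * w0 + u3 * a1 = 0)
    (h2 : -(u0 * w1) + u1 * w0 + u3 * a2 = 0)
    (h3 : -(u0 * a0) - u1 * a1 - u2 * a2 = 0) :
    u0 = 0 ∧ u1 = 0 ∧ u2 = 0 ∧ u3 = 0 := by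
  have h3' : u3 = 0 := by
    have key : u3 * (a0 * w0 + a1 * w1 + a2 * w2) = 0 := by
      linear_combination w0 * h0 + w1 * h1 + w2 * h2
    exact (mul_eq_zero.1 key).resolve_right hc
  subst h3'
  refine ⟨?_, ?_, ?_, rfl⟩
  · have key : u0 * (a0 * w0 + a1 * w1 + a2 * w2) = 0 := by
      linear_combination a2 * h1 - a1 * h2 - w0 * h3
    exact (mul_eq_zero.1 key).resolve_right hc
  · have key : u1 * (a0 * w0 + a1 * w1 + a2 * w2) = 0 := by
      linear_combination -a2 * h0 + a0 * h2 - w1 * h3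
    exact (mul_eq_zero.1 key).resolve_right hc
  · have key : u2 * (a0 * w0 + a1 * w1 + a2 * w2) = 0 := by
      linear_combination a1 * h0 - a0 * h1 - w2 * h3
    exact (mul_eq_zero.1 key).resolve_right hc

/-- for the 2-form `Ω_ν` on the 4-dimensional domain `I×M`,
`Ω_ν ∧ Ω_ν = −2(q − 2ν𝓗_w) dx∧dy∧dz∧dt`, where `q = w·∇φ` and
`𝓗_w = (1/2)w·(∇×w)`; here `(Ω∧Ω)(e₀,e₁,e₂,e₃) = 2(Ω₀₁Ω₂₃ − Ω₀₂Ω₁₃ + Ω₀₃Ω₁₂)`.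
Consequently `Ω_ν` is non-degenerate at points where `q − 2ν𝓗_w ≠ 0`. -/

theorem statement_3 (ν : ℝ) (φ : E4 → ℝ) (v : E4 → Fin 3 → ℝ)
    (hv : ContDiff ℝ (⊤ : ℕ∞) v) (hφ : ContDiff ℝ (⊤ : ℕ∞) φ) :
    (∀ x : E4,
      2 * (OmegaNu ν φ v x 0 1 * OmegaNu ν φ v x 2 3
          - OmegaNu ν φ v x 0 2 * OmegaNu ν φ v x 1 3
          + OmegaNu ν φ v x 0 3 * OmegaNu ν φ v x 1 2)
        = -2 * (pvort φ v x - 2 * ν * Hw v x)) ∧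
    (∀ x : E4, pvort φ v x - 2 * ν * Hw v x ≠ 0 →
      ∀ u : Fin 4 → ℝ, u ≠ 0 →
        ∃ u' : Fin 4 → ℝ, (∑ a, ∑ b, u a * OmegaNu ν φ v x a b * u' b) ≠ 0) := by
  have hPf : ∀ x : E4, pvort φ v x - 2 * ν * Hw v x
      = aNu ν φ v x 0 * curl4 v x 0 + aNu ν φ v x 1 * curl4 v x 1
        + aNu ν φ v x 2 * curl4 v x 2 := by
    intro x
    simp [pvort, Hw, aNu, dot3, cross3, Fin.sum_univ_three]
    ring
  constructor
  · intro x
    simp only [OmegaNu]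
    simp [hPf x]
    ring
  · intro x hx u hu
    set w0 := curl4 v x 0; set w1 := curl4 v x 1; set w2 := curl4 v x 2
    set a0 := aNu ν φ v x 0; set a1 := aNu ν φ v x 1; set a2 := aNu ν φ v x 2
    have hc : a0 * w0 + a1 * w1 + a2 * w2 ≠ 0 := by rw [← hPf x]; exact hx
    by_contra hcon
    push_neg at hcon
    have hs : ∀ b : Fin 4, ∑ a, u a * OmegaNu ν φ v x a b = 0 := by
      intro b
      have := hcon (Pi.single b 1)
      rw [Finset.sum_comm] at this
      simpa [Pi.single_apply, Finset.mul_sum, Finset.sum_mul,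
        Finset.sum_ite_eq', mul_comm] using this
    have h0 := hs 0
    have h1 := hs 1
    have h2 := hs 2
    have h3 := hs 3
    simp only [Fin.sum_univ_four, OmegaNu, Matrix.cons_val_zero, Matrix.cons_val_one,
      Matrix.head_cons, Matrix.cons_val_two, Matrix.tail_cons, Matrix.cons_val_three,
      Matrix.head_fin_const] at h0 h1 h2 h3
    obtain ⟨e0, e1, e2, e3⟩ := omega_key w0 w1 w2 a0 a1 a2 (u 0) (u 1) (u 2) (u 3) hc
      (by linarith [h0]) (by linarith [h1]) (by linarith [h2]) (by linarith [h3])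
    apply hu
    funext i
    fin_cases i <;> simpa [e0, e1, e2, e3]
end
end

section
/- Under the hypotheses of the previous statement, for every k ≥ 0 the iterated bracket (L_J)^k(X_f) = [J,[J,...,[J,X_f]...]] is a Hamiltonian vector field with Hamiltonian function Σ_{j=0}^{k} (−1)^{k−j} C(k,j) J^j(f), where J^j denotes the j-fold directional derivative along J; in particular (L_J)²(X_f) has Hamiltonian J²(f) − 2J(f) + f. -/
noncomputable section

/-- Points of `ℝⁿ` (a chart of the manifold `N`). -/
abbrev En (n : ℕ) := Fin n → ℝ

variable {n : ℕ}

/-- Partial derivative `∂ₐ f`. -/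
def pdn (a : Fin n) (f : En n → ℝ) (x : En n) : ℝ := fderiv ℝ f x (Pi.single a 1)

/-- Directional derivative `J(f) = Σ_c J^c ∂_c f` of a function along a vector field. -/
def dirD (J : En n → Fin n → ℝ) (f : En n → ℝ) (x : En n) : ℝ :=
  ∑ c, J x c * pdn c f x

/-- Lie bracket `[X,Y]` of vector fields, in coordinates. -/
def lieBr (X Y : En n → Fin n → ℝ) (x : En n) (a : Fin n) : ℝ :=
  ∑ c, (X x c * pdn c (fun y => Y y a) x - Y x c * pdn c (fun y => X y a) x)

/-- Lie derivative `(L_X Ω)_ab` of a 2-form (given by its coefficient matrix), in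
coordinates: `X^c ∂_c Ω_ab + Ω_cb ∂_a X^c + Ω_ac ∂_b X^c`. -/
def lieD2 (X : En n → Fin n → ℝ) (Ω : En n → Fin n → Fin n → ℝ)
    (x : En n) (a b : Fin n) : ℝ :=
  dirD X (fun y => Ω y a b) x
    + ∑ c, Ω x c b * pdn a (fun y => X y c) x
    + ∑ c, Ω x a c * pdn b (fun y => X y c) x

/-- Exterior derivative of a 1-form: `(dθ)_ab = ∂ₐθ_b − ∂_bθₐ`. -/
def extD1 (θ : En n → Fin n → ℝ) (x : En n) (a b : Fin n) : ℝ :=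
  pdn a (fun y => θ y b) x - pdn b (fun y => θ y a) x

/-- Exterior derivative of a 2-form: `(dΩ)_abc = ∂ₐΩ_bc + ∂_bΩ_ca + ∂_cΩ_ab`. -/
def extD2 (Ω : En n → Fin n → Fin n → ℝ) (x : En n) (a b c : Fin n) : ℝ :=
  pdn a (fun y => Ω y b c) x + pdn b (fun y => Ω y c a) x + pdn c (fun y => Ω y a b) x

/-- Interior product `(i_X Ω)_b = Σ_a X^a Ω_ab` of a vector field with a 2-form. -/
def ip2 (X : En n → Fin n → ℝ) (Ω : En n → Fin n → Fin n → ℝ)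
    (x : En n) (b : Fin n) : ℝ :=
  ∑ a, X x a * Ω x a b

/-- `Ω` is a symplectic form: smooth, antisymmetric, closed, non-degenerate. -/
structure IsSymplectic (Ω : En n → Fin n → Fin n → ℝ) : Prop where
  smooth : ∀ a b, ContDiff ℝ (⊤ : ℕ∞) fun x => Ω x a b
  antisymm : ∀ x a b, Ω x a b = -Ω x b a
  closed : ∀ x a b c, extD2 Ω x a b c = 0
  nondeg : ∀ x (u : Fin n → ℝ), u ≠ 0 →
    ∃ u' : Fin n → ℝ, (∑ a, ∑ b, u a * Ω x a b * u' b) ≠ 0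

theorem pdn_smooth {f : En n → ℝ} (hf : ContDiff ℝ (⊤ : ℕ∞) f) (a : Fin n) :
    ContDiff ℝ (⊤ : ℕ∞) fun x => pdn a f x := by
  exact (hf.fderiv_right ((by simp))).clm_apply contDiff_const

theorem pdn_mul {f g : En n → ℝ} {x : En n} (hf : DifferentiableAt ℝ f x) (hg : DifferentiableAt ℝ g x)
    (a : Fin n) : pdn a (fun y => f y * g y) x = pdn a f x * g x + f x * pdn a g x := by
  unfold pdn
  rw [fderiv_fun_mul hf hg]; simp only [ContinuousLinearMap.add_apply, ContinuousLinearMap.smul_apply, smul_eq_mul]; ring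

theorem pdn_sum {ι : Type*} {s : Finset ι} {F : ι → En n → ℝ} {x : En n}
    (h : ∀ i ∈ s, DifferentiableAt ℝ (F i) x) (a : Fin n) :
    pdn a (fun y => ∑ i ∈ s, F i y) x = ∑ i ∈ s, pdn a (F i) x := by
  unfold pdn
  rw [fderiv_fun_sum h]; simp

theorem pdn_const_mul {f : En n → ℝ} {x : En n} (hf : DifferentiableAt ℝ f x) (c : ℝ)
    (a : Fin n) : pdn a (fun y => c * f y) x = c * pdn a f x := by
  unfold pdn
  rw [fderiv_const_mul hf]; simp

theorem pdn_comm {g : En n → ℝ} (hg : ContDiff ℝ (⊤ : ℕ∞) g) (x : En n) (b c : Fin n) :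
    pdn c (fun y => pdn b g y) x = pdn b (fun y => pdn c g y) x := by
  have hd : DifferentiableAt ℝ (fderiv ℝ g) x :=
    ((hg.fderiv_right (m := 1) ((WithTop.coe_le_coe.mpr le_top))).differentiable one_ne_zero).differentiableAt
  have key : ∀ (d : Fin n) (v : En n), pdn d (fun y => fderiv ℝ g y v) x
      = fderiv ℝ (fderiv ℝ g) x (Pi.single d 1) v := by
    intro d v
    unfold pdn
    rw [fderiv_clm_apply hd (differentiableAt_const v)]
    simp
  have hsymm : IsSymmSndFDerivAt ℝ g x := (hg.contDiffAt).isSymmSndFDerivAt (by rw [minSmoothness_of_isRCLikeNormedField]; exact WithTop.coe_le_coe.mpr le_top)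
  show pdn c (fun y => fderiv ℝ g y (Pi.single b 1)) x
      = pdn b (fun y => fderiv ℝ g y (Pi.single c 1)) x
  rw [key, key, hsymm (Pi.single c 1) (Pi.single b 1)]

theorem pdn_neg {f : En n → ℝ} {x : En n} (a : Fin n) :
    pdn a (fun y => -f y) x = -pdn a f x := by
  unfold pdn
  rw [fderiv_fun_neg]; simp

/-- Purely algebraic core of the induction step. -/

theorem key_alg {ι : Type*} [Fintype ι]
    (Jv Xv Dg Hg bJ Omb : ι → ℝ) (Dgb : ℝ)
    (OmF dX dJ dOm : ι → ι → ℝ)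
    (H1 : ∀ c, ∑ a, (dX c a * Omb a + Xv a * dOm c a) = -Hg c)
    (H2 : ∀ a, ∑ c, Jv c * dOm c a
        = Omb a - ∑ c, Omb c * dJ a c - ∑ c, OmF a c * bJ c)
    (H3 : ∀ c, ∑ a, Xv a * OmF a c = -Dg c)
    (H3b : ∑ a, Xv a * Omb a = -Dgb) :
    ∑ a, (∑ c, (Jv c * dX c a - Xv c * dJ c a)) * Omb a
      = -(∑ c, (bJ c * Dg c + Jv c * Hg c)) + Dgb := by
  have hA : ∀ c, ∑ a, dX c a * Omb a = -Hg c - ∑ a, Xv a * dOm c a := by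
    intro c
    have := H1 c
    rw [Finset.sum_add_distrib] at this
    linarith
  have hLHS : ∑ a, (∑ c, (Jv c * dX c a - Xv c * dJ c a)) * Omb a
      = (∑ a, ∑ c, Jv c * (dX c a * Omb a)) - ∑ a, ∑ c, Xv c * dJ c a * Omb a := by
    rw [← Finset.sum_sub_distrib]
    refine Finset.sum_congr rfl fun a _ => ?_
    rw [Finset.sum_mul, ← Finset.sum_sub_distrib]
    refine Finset.sum_congr rfl fun c _ => by ring
  have hT1 : ∑ a, ∑ c, Jv c * (dX c a * Omb a)
      = -(∑ c, Jv c * Hg c) - ∑ c, ∑ a, Jv c * (Xv a * dOm c a) := by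
    rw [Finset.sum_comm]
    have : ∀ c : ι, ∑ a, Jv c * (dX c a * Omb a)
        = -(Jv c * Hg c) - ∑ a, Jv c * (Xv a * dOm c a) := by
      intro c
      rw [← Finset.mul_sum, hA c, mul_sub, mul_neg, Finset.mul_sum]
    rw [Finset.sum_congr rfl fun c _ => this c, Finset.sum_sub_distrib]
    simp
  have hS2 : ∑ c, ∑ a, Jv c * (Xv a * dOm c a)
      = -Dgb - (∑ a, ∑ c, Xv a * (Omb c * dJ a c)) - ∑ c, ∑ a, bJ c * (Xv a * OmF a c) := by
    rw [Finset.sum_comm]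
    have e1 : ∀ a : ι, ∑ c, Jv c * (Xv a * dOm c a)
        = Xv a * Omb a - ∑ c, Xv a * (Omb c * dJ a c) - ∑ c, Xv a * (OmF a c * bJ c) := by
      intro a
      have : ∑ c, Jv c * (Xv a * dOm c a) = Xv a * ∑ c, Jv c * dOm c a := by
        rw [Finset.mul_sum]
        exact Finset.sum_congr rfl fun c _ => by ring
      rw [this, H2 a, mul_sub, mul_sub, Finset.mul_sum, Finset.mul_sum]
    rw [Finset.sum_congr rfl fun a _ => e1 a, Finset.sum_sub_distrib, Finset.sum_sub_distrib,
      H3b, Finset.sum_comm (f := fun a c => Xv a * (OmF a c * bJ c))]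
    congr 1
    exact Finset.sum_congr rfl fun c _ => Finset.sum_congr rfl fun a _ => by ring
  have hE : ∑ c, ∑ a, bJ c * (Xv a * OmF a c) = -∑ c, bJ c * Dg c := by
    rw [← Finset.sum_neg_distrib]
    refine Finset.sum_congr rfl fun c _ => ?_
    have : ∑ a, bJ c * (Xv a * OmF a c) = bJ c * ∑ a, Xv a * OmF a c := by
      rw [Finset.mul_sum]
    rw [this, H3 c, mul_neg]
  have hT2 : ∑ a, ∑ c, Xv c * dJ c a * Omb a = ∑ a, ∑ c, Xv a * (Omb c * dJ a c) := by
    rw [Finset.sum_comm]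
    exact Finset.sum_congr rfl fun a _ => Finset.sum_congr rfl fun c _ => by ring
  rw [hLHS, hT1, hS2, hE, hT2, Finset.sum_add_distrib]
  ring

theorem dirD_smooth {J : En n → Fin n → ℝ} {g : En n → ℝ}
    (hJ : ∀ a, ContDiff ℝ (⊤ : ℕ∞) fun x => J x a) (hg : ContDiff ℝ (⊤ : ℕ∞) g) :
    ContDiff ℝ (⊤ : ℕ∞) (dirD J g) := by
  unfold dirD
  exact ContDiff.sum fun c _ => (hJ c).mul (pdn_smooth hg c)

theorem lieBr_smooth {J X : En n → Fin n → ℝ}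
    (hJ : ∀ a, ContDiff ℝ (⊤ : ℕ∞) fun x => J x a) (hX : ∀ a, ContDiff ℝ (⊤ : ℕ∞) fun x => X x a)
    (a : Fin n) : ContDiff ℝ (⊤ : ℕ∞) fun x => lieBr J X x a := by
  unfold lieBr
  exact ContDiff.sum fun c _ =>
    ((hJ c).mul (pdn_smooth (hX a) c)).sub ((hX c).mul (pdn_smooth (hJ a) c))

theorem step_ham {Ω : En n → Fin n → Fin n → ℝ} {J X : En n → Fin n → ℝ} {g : En n → ℝ}
    (hΩ : ∀ a b, ContDiff ℝ (⊤ : ℕ∞) fun x => Ω x a b)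
    (hJsm : ∀ a, ContDiff ℝ (⊤ : ℕ∞) fun x => J x a)
    (hXsm : ∀ a, ContDiff ℝ (⊤ : ℕ∞) fun x => X x a)
    (hg : ContDiff ℝ (⊤ : ℕ∞) g)
    (hJ : ∀ x a b, lieD2 J Ω x a b = Ω x a b)
    (hX : ∀ x b, ip2 X Ω x b = -pdn b g x) (x : En n) (b : Fin n) :
    ip2 (lieBr J X) Ω x b = -pdn b (fun y => dirD J g y - g y) x := by
  have hdX : ∀ (a : Fin n) (y : En n), DifferentiableAt ℝ (fun z => X z a) y :=
    fun a y => ((hXsm a).differentiable (by simp)).differentiableAt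
  have hdJ : ∀ (a : Fin n) (y : En n), DifferentiableAt ℝ (fun z => J z a) y :=
    fun a y => ((hJsm a).differentiable (by simp)).differentiableAt
  have hdΩ : ∀ (a c : Fin n) (y : En n), DifferentiableAt ℝ (fun z => Ω z a c) y :=
    fun a c y => ((hΩ a c).differentiable (by simp)).differentiableAt
  have hdpg : ∀ (c : Fin n) (y : En n), DifferentiableAt ℝ (fun z => pdn c g z) y :=
    fun c y => ((pdn_smooth hg c).differentiable (by simp)).differentiableAt
  -- H1
  have H1 : ∀ c : Fin n, ∑ a, (pdn c (fun z => X z a) x * Ω x a b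
      + X x a * pdn c (fun z => Ω z a b) x) = -pdn c (fun y => pdn b g y) x := by
    intro c
    have e1 : pdn c (fun y => ip2 X Ω y b) x
        = ∑ a, (pdn c (fun z => X z a) x * Ω x a b + X x a * pdn c (fun z => Ω z a b) x) := by
      unfold ip2
      rw [pdn_sum (F := fun a y => X y a * Ω y a b) (fun a _ => (hdX a x).mul (hdΩ a b x))]
      exact Finset.sum_congr rfl fun a _ => pdn_mul (hdX a x) (hdΩ a b x) c
    have e2 : (fun y => ip2 X Ω y b) = fun y => -pdn b g y := funext fun y => hX y b
    rw [← e1, e2, pdn_neg]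
  -- H2
  have H2 : ∀ a : Fin n, ∑ c, J x c * pdn c (fun z => Ω z a b) x
      = Ω x a b - ∑ c, Ω x c b * pdn a (fun z => J z c) x
        - ∑ c, Ω x a c * pdn b (fun z => J z c) x := by
    intro a
    have := hJ x a b
    unfold lieD2 dirD at this
    linarith
  -- H3
  have H3 : ∀ c : Fin n, ∑ a, X x a * Ω x a c = -pdn c g x := fun c => hX x c
  have key := key_alg (fun c => J x c) (fun a => X x a)
    (fun c => pdn c g x) (fun c => pdn c (fun y => pdn b g y) x)
    (fun c => pdn b (fun z => J z c) x) (fun a => Ω x a b) (pdn b g x)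
    (fun a c => Ω x a c)
    (fun c a => pdn c (fun z => X z a) x)
    (fun a c => pdn a (fun z => J z c) x)
    (fun c a => pdn c (fun z => Ω z a b) x)
    H1 H2 H3 (hX x b)
  -- LHS of goal equals LHS of key
  have eL : ip2 (lieBr J X) Ω x b
      = ∑ a, (∑ c, (J x c * pdn c (fun z => X z a) x
          - X x c * pdn c (fun z => J z a) x)) * Ω x a b := rfl
  -- RHS of goal
  have eR : pdn b (fun y => dirD J g y - g y) x
      = (∑ c, (pdn b (fun z => J z c) x * pdn c g x
          + J x c * pdn c (fun y => pdn b g y) x)) - pdn b g x := by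
    have hdd : DifferentiableAt ℝ (dirD J g) x :=
      ((dirD_smooth hJsm hg).differentiable (by simp)).differentiableAt
    have hdg : DifferentiableAt ℝ g x := (hg.differentiable (by simp)).differentiableAt
    have e1 : pdn b (fun y => dirD J g y - g y) x = pdn b (dirD J g) x - pdn b g x := by
      unfold pdn
      rw [fderiv_fun_sub hdd hdg]; simp
    rw [e1]
    congr 1
    unfold dirD
    rw [pdn_sum (F := fun c x => J x c * pdn c g x) (fun c _ => (hdJ c x).mul (hdpg c x))]
    refine Finset.sum_congr rfl fun c _ => ?_
    rw [pdn_mul (hdJ c x) (hdpg c x) b, pdn_comm hg x b c]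
  rw [eL, key, eR]
  ring

theorem binom_step (k : ℕ) (u : ℕ → ℝ) :
    ∑ j ∈ Finset.range (k+2), (-1:ℝ)^(k+1-j) * ((k+1).choose j : ℝ) * u j
      = (∑ j ∈ Finset.range (k+1), (-1:ℝ)^(k-j) * (k.choose j : ℝ) * u (j+1))
        - ∑ j ∈ Finset.range (k+1), (-1:ℝ)^(k-j) * (k.choose j : ℝ) * u j := by
  rw [Finset.sum_range_succ' _ (k+1)]
  have e1 : ∀ j ∈ Finset.range (k+1),
      (-1:ℝ)^(k+1-(j+1)) * (((k+1).choose (j+1) : ℕ) : ℝ) * u (j+1)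
      = (-1:ℝ)^(k-j) * (k.choose j : ℝ) * u (j+1)
        + (-1:ℝ)^(k-j) * (k.choose (j+1) : ℝ) * u (j+1) := by
    intro j hj
    rw [Nat.succ_sub_succ, Nat.choose_succ_succ]
    push_cast
    ring
  rw [Finset.sum_congr rfl e1, Finset.sum_add_distrib]
  have e2 : ∑ j ∈ Finset.range (k+1), (-1:ℝ)^(k-j) * (k.choose (j+1) : ℝ) * u (j+1)
      = ∑ j ∈ Finset.range k, (-1:ℝ)^(k-j) * (k.choose (j+1) : ℝ) * u (j+1) := by
    rw [Finset.sum_range_succ]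
    simp
  have e3 : ∑ j ∈ Finset.range (k+1), (-1:ℝ)^(k-j) * (k.choose j : ℝ) * u j
      = ∑ j ∈ Finset.range k, (-1:ℝ)^(k-(j+1)) * (k.choose (j+1):ℝ) * u (j+1)
        + (-1:ℝ)^k * u 0 := by
    rw [Finset.sum_range_succ' _ k]
    simp
  have e4 : ∀ j ∈ Finset.range k, (-1:ℝ)^(k-(j+1)) * (k.choose (j+1):ℝ) * u (j+1)
      = -((-1:ℝ)^(k-j) * (k.choose (j+1):ℝ) * u (j+1)) := by
    intro j hj
    have hj' : j < k := Finset.mem_range.mp hj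
    have hkj : k - j = (k - (j+1)) + 1 := by omega
    rw [hkj, pow_succ]
    ring
  rw [e2, e3, Finset.sum_congr rfl e4, Finset.sum_neg_distrib]
  simp only [Nat.sub_zero, Nat.choose_zero_right, Nat.cast_one, pow_succ]
  ring

theorem iterDirD_smooth {J : En n → Fin n → ℝ} {f : En n → ℝ}
    (hJsm : ∀ a, ContDiff ℝ (⊤ : ℕ∞) fun x => J x a) (hf : ContDiff ℝ (⊤ : ℕ∞) f) :
    ∀ j, ContDiff ℝ (⊤ : ℕ∞) ((dirD J)^[j] f) := by
  intro j
  induction j with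
  | zero => exact hf
  | succ j ih =>
    rw [Function.iterate_succ_apply']
    exact dirD_smooth hJsm ih

theorem dirD_lin {J : En n → Fin n → ℝ} {m : ℕ} {coef : ℕ → ℝ} {F : ℕ → En n → ℝ}
    (hF : ∀ j, ContDiff ℝ (⊤ : ℕ∞) (F j)) (y : En n) :
    dirD J (fun z => ∑ j ∈ Finset.range m, coef j * F j z) y
      = ∑ j ∈ Finset.range m, coef j * dirD J (F j) y := by
  unfold dirD
  have e1 : ∀ c : Fin n, pdn c (fun z => ∑ j ∈ Finset.range m, coef j * F j z) y
      = ∑ j ∈ Finset.range m, coef j * pdn c (F j) y := by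
    intro c
    rw [pdn_sum (F := fun j z => coef j * F j z) (fun j _ => (differentiableAt_const (coef j)).mul
      (((hF j).differentiable (by simp)).differentiableAt))]
    exact Finset.sum_congr rfl fun j _ =>
      pdn_const_mul (((hF j).differentiable (by simp)).differentiableAt) (coef j) c
  rw [Finset.sum_congr rfl fun c _ => by rw [e1 c, Finset.mul_sum], Finset.sum_comm]
  refine Finset.sum_congr rfl fun j _ => ?_
  rw [Finset.mul_sum]
  exact Finset.sum_congr rfl fun c _ => by ring

/-- with `(N,Ω)` symplectic, `J` a Liouville field (`L_J Ω = Ω`)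
and `X_f` Hamiltonian (`i_{X_f}Ω = −df`), for every `k ≥ 0` the iterated bracket
`(L_J)^k(X_f) = [J,[J,…,[J,X_f]…]]` is Hamiltonian with Hamiltonian function
`Σ_{j=0}^{k} (−1)^{k−j} C(k,j) J^j(f)`; in particular `(L_J)²(X_f)` has
Hamiltonian `J²(f) − 2J(f) + f`. -/
theorem statement_10 (Ω : En n → Fin n → Fin n → ℝ)
    (J Xf : En n → Fin n → ℝ) (f : En n → ℝ)
    (hΩ : IsSymplectic Ω)
    (hJsmooth : ∀ a, ContDiff ℝ (⊤ : ℕ∞) fun x => J x a)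
    (hXsmooth : ∀ a, ContDiff ℝ (⊤ : ℕ∞) fun x => Xf x a)
    (hf : ContDiff ℝ (⊤ : ℕ∞) f)
    (hJ : ∀ x a b, lieD2 J Ω x a b = Ω x a b)
    (hXf : ∀ x b, ip2 Xf Ω x b = -pdn b f x) :
    (∀ (k : ℕ) (x : En n) (b : Fin n),
      ip2 ((lieBr J)^[k] Xf) Ω x b
        = -pdn b (fun y => ∑ j ∈ Finset.range (k + 1),
            ((-1 : ℝ)) ^ (k - j) * (k.choose j : ℝ) * ((dirD J)^[j] f) y) x) ∧
    (∀ (x : En n) (b : Fin n),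
      ip2 ((lieBr J)^[2] Xf) Ω x b
        = -pdn b (fun y => dirD J (dirD J f) y - 2 * dirD J f y + f y) x) := by
  have hXk : ∀ (k : ℕ) (a : Fin n), ContDiff ℝ (⊤ : ℕ∞) fun x => (lieBr J)^[k] Xf x a := by
    intro k
    induction k with
    | zero => exact hXsmooth
    | succ k ih =>
      intro a
      rw [Function.iterate_succ_apply' (lieBr J) k Xf]
      exact lieBr_smooth hJsmooth ih a
  have hgk : ∀ k : ℕ, ContDiff ℝ (⊤ : ℕ∞) (fun y => ∑ j ∈ Finset.range (k + 1),
      ((-1 : ℝ)) ^ (k - j) * (k.choose j : ℝ) * ((dirD J)^[j] f) y) :=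
    fun k => ContDiff.sum fun j _ =>
      contDiff_const.mul (iterDirD_smooth hJsmooth hf j)
  have main : ∀ (k : ℕ) (x : En n) (b : Fin n),
      ip2 ((lieBr J)^[k] Xf) Ω x b
        = -pdn b (fun y => ∑ j ∈ Finset.range (k + 1),
            ((-1 : ℝ)) ^ (k - j) * (k.choose j : ℝ) * ((dirD J)^[j] f) y) x := by
    intro k
    induction k with
    | zero =>
      intro x b
      have e : (fun y => ∑ j ∈ Finset.range (0 + 1),
          ((-1 : ℝ)) ^ (0 - j) * ((0:ℕ).choose j : ℝ) * ((dirD J)^[j] f) y) = f := by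
        funext y
        simp
      rw [e]
      exact hXf x b
    | succ k ih =>
      intro x b
      rw [Function.iterate_succ_apply' (lieBr J) k Xf]
      rw [step_ham hΩ.smooth hJsmooth (hXk k) (hgk k) hJ ih x b]
      have efun : (fun y => dirD J (fun y => ∑ j ∈ Finset.range (k + 1),
            ((-1 : ℝ)) ^ (k - j) * (k.choose j : ℝ) * ((dirD J)^[j] f) y) y
          - ∑ j ∈ Finset.range (k + 1),
            ((-1 : ℝ)) ^ (k - j) * (k.choose j : ℝ) * ((dirD J)^[j] f) y)
          = (fun y => ∑ j ∈ Finset.range (k + 1 + 1),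
            ((-1 : ℝ)) ^ (k + 1 - j) * ((k+1).choose j : ℝ) * ((dirD J)^[j] f) y) := by
        funext y
        rw [dirD_lin (fun j => iterDirD_smooth hJsmooth hf j) y]
        have e2 : ∀ j ∈ Finset.range (k+1),
            ((-1 : ℝ)) ^ (k - j) * (k.choose j : ℝ) * dirD J ((dirD J)^[j] f) y
            = ((-1 : ℝ)) ^ (k - j) * (k.choose j : ℝ) * ((dirD J)^[j+1] f) y := by
          intro j _
          rw [Function.iterate_succ_apply' (dirD J) j f]
        rw [Finset.sum_congr rfl e2]
        exact (binom_step k (fun j => ((dirD J)^[j] f) y)).symm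
      rw [efun]
  refine ⟨main, fun x b => ?_⟩
  rw [main 2 x b]
  have efun : (fun y => ∑ j ∈ Finset.range (2 + 1),
      ((-1 : ℝ)) ^ (2 - j) * ((2:ℕ).choose j : ℝ) * ((dirD J)^[j] f) y)
      = (fun y => dirD J (dirD J f) y - 2 * dirD J f y + f y) := by
    funext y
    rw [Finset.sum_range_succ, Finset.sum_range_succ, Finset.sum_range_one]
    have h2 : ((dirD J)^[2] f) y = dirD J (dirD J f) y := by
      rw [Function.iterate_succ_apply', Function.iterate_one]
    rw [h2]
    norm_num
    ring
  rw [efun]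
end
end
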